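/- arXiv:1812.00901 — 2 statements merged into one kernel-verified Lean document; each statement's English description precedes it below -/
import Mathlib

section
/- Let F be a finite field and let C₁ ⊆ C₂ ⊆ (Fin N → F) be linear codes, each containing a nonzero vector, such that Δ(C₂) < Δ(C₁). Then the sum over all s ∈ C₂ \ C₁ of the cardinality of {c ∈ C₁ : hammingDist(s, c) ≤ Δ(C₂)} equals |C₁| · A_{Δ(C₂)}(C₂). -/
/-!
For `s ∈ C₂ \ C₁` and `c ∈ C₁` the difference `s - c` is a nonzero codeword of `C₂`, so
`d(s, c) ≤ Δ(C₂)` forces `wt(s - c) = Δ(C₂)`. Conversely a codeword `w` of weight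
`Δ(C₂) < Δ(C₁)` lies outside `C₁`, so `c + w ∈ C₂ \ C₁` for every `c ∈ C₁`. Hence the sum
counts the pairs `(c, w) ∈ C₁ × {w ∈ C₂ | wt w = Δ(C₂)}` through `s = c + w`.
-/

/-- The minimum distance of a linear code `C`: the least Hamming weight of a
nonzero codeword of `C`. -/
noncomputable def minDist {N : ℕ} {F : Type*} [Field F] [Fintype F] [DecidableEq F]
    (C : Submodule F (Fin N → F)) : ℕ :=
  sInf {w : ℕ | ∃ c ∈ C, c ≠ 0 ∧ hammingNorm c = w}

/-- `A_w(C)`: the number of codewords of `C` of Hamming weight exactly `w`. -/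
noncomputable def weightCount {N : ℕ} {F : Type*} [Field F] [Fintype F] [DecidableEq F]
    (C : Submodule F (Fin N → F)) (w : ℕ) : ℕ :=
  {c : Fin N → F | c ∈ C ∧ hammingNorm c = w}.ncard

open Finset in
theorem Finset.sum_card_filter_sub_mem {G : Type*} [AddCommGroup G] [DecidableEq G]
    {S H W : Finset G} (h : ∀ c ∈ H, ∀ w ∈ W, c + w ∈ S) :
    ∑ s ∈ S, #{c ∈ H | s - c ∈ W} = #H * #W := by
  have hfiber : ∀ c ∈ H, #{s ∈ S | s - c ∈ W} = #W := fun c hc =>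
    card_nbij' (· - c) (c + ·) (fun s hs => (mem_filter.1 hs).2)
      (fun w hw => mem_filter.2 ⟨h c hc w hw, by simpa using hw⟩)
      (fun s _ => by simp) (fun w _ => by simp)
  calc ∑ s ∈ S, #{c ∈ H | s - c ∈ W}
      = ∑ c ∈ H, #{s ∈ S | s - c ∈ W} := by simp only [card_filter]; exact sum_comm
    _ = ∑ _c ∈ H, #W := sum_congr rfl hfiber
    _ = #H * #W := by rw [sum_const, smul_eq_mul]

theorem finsum_mem_ncard_sub_mem {G : Type*} [AddCommGroup G] [Finite G]
    {S H W : Set G} (h : ∀ c ∈ H, ∀ w ∈ W, c + w ∈ S) :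
    ∑ᶠ s ∈ S, {c | c ∈ H ∧ s - c ∈ W}.ncard = H.ncard * W.ncard := by
  classical
  have := Fintype.ofFinite G
  have hcount := Finset.sum_card_filter_sub_mem (S := S.toFinset) (H := H.toFinset)
    (W := W.toFinset) (by simpa using h)
  rw [← Set.coe_toFinset S, finsum_mem_coe_finset, Set.ncard_eq_toFinset_card' H,
    Set.ncard_eq_toFinset_card' W, ← hcount]
  refine Finset.sum_congr rfl fun s _ => ?_
  rw [Set.ncard_eq_toFinset_card']
  congr 1
  ext c
  simp

section minDist

variable {N : ℕ} {F : Type*} [Field F] [Fintype F] [DecidableEq F]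
  {C : Submodule F (Fin N → F)}

theorem minDist_le_hammingNorm {x : Fin N → F} (hx : x ∈ C) (h0 : x ≠ 0) :
    minDist C ≤ hammingNorm x :=
  Nat.sInf_le ⟨x, hx, h0, rfl⟩

theorem minDist_pos_iff : 0 < minDist C ↔ ∃ c ∈ C, c ≠ 0 := by
  rw [minDist, Nat.pos_iff_ne_zero, Ne, Nat.sInf_eq_zero]
  simp [hammingNorm_eq_zero, Set.eq_empty_iff_forall_notMem]

end minDist

theorem stmt_2_general {N : ℕ} {F : Type*} [Field F] [Fintype F] [DecidableEq F]
    (C₁ C₂ : Submodule F (Fin N → F)) (hsub : C₁ ≤ C₂)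
    (hΔ : minDist C₂ < minDist C₁) :
    ∑ᶠ s ∈ ((C₂ : Set (Fin N → F)) \ (C₁ : Set (Fin N → F))),
        {c : Fin N → F | c ∈ C₁ ∧ hammingDist s c ≤ minDist C₂}.ncard
      = Nat.card C₁ * weightCount C₂ (minDist C₂) := by
  set d := minDist C₂
  set W : Set (Fin N → F) := {w | w ∈ C₂ ∧ hammingNorm w = d}
  have hd : 0 < d := by
    obtain ⟨c, hc, hc0⟩ := minDist_pos_iff.1 ((Nat.zero_le d).trans_lt hΔ)
    exact minDist_pos_iff.2 ⟨c, hsub hc, hc0⟩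
  have hW : ∀ w ∈ W, w ∉ C₁ := fun w ⟨_, hw⟩ hw₁ =>
    (minDist_le_hammingNorm hw₁ (hammingNorm_pos_iff.1 (hw ▸ hd))).not_gt (hw ▸ hΔ)
  have hball : ∀ s ∈ (C₂ : Set (Fin N → F)) \ C₁,
      {c | c ∈ C₁ ∧ hammingDist s c ≤ d} = {c | c ∈ C₁ ∧ s - c ∈ W} := by
    refine fun s ⟨hs₂, hs₁⟩ => Set.ext fun c => and_congr_right fun hc => ?_
    have hsc : s - c ∈ C₂ := C₂.sub_mem hs₂ (hsub hc)
    have hsc0 : s - c ≠ 0 := fun h => hs₁ (sub_eq_zero.1 h ▸ hc)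
    rw [hammingDist_comm, hammingDist_eq_hammingNorm, neg_add_eq_sub]
    exact (minDist_le_hammingNorm hsc hsc0).ge_iff_eq'.trans (and_iff_right hsc).symm
  have htranslate : ∀ c ∈ (C₁ : Set (Fin N → F)), ∀ w ∈ W, c + w ∈ (C₂ : Set (Fin N → F)) \ C₁ :=
    fun c hc w hw => ⟨C₂.add_mem (hsub hc) hw.1,
      fun h => hW w hw (by simpa using C₁.sub_mem h hc)⟩
  rw [finsum_mem_congr rfl fun s hs => congrArg Set.ncard (hball s hs)]
  refine (finsum_mem_ncard_sub_mem htranslate).trans ?_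
  rw [← Nat.card_coe_set_eq]
  rfl

/-- the total count, over centers `s ∈ C₂ \ C₁`, of codewords of `C₁`
within distance `Δ(C₂)` of `s` equals `|C₁| · A_{Δ(C₂)}(C₂)`. -/
theorem stmt_2 {N : ℕ} {F : Type*} [Field F] [Fintype F] [DecidableEq F]
    (C₁ C₂ : Submodule F (Fin N → F)) (hsub : C₁ ≤ C₂)
    (h1 : ∃ c ∈ C₁, c ≠ 0) (h2 : ∃ c ∈ C₂, c ≠ 0)
    (hΔ : minDist C₂ < minDist C₁) :
    ∑ᶠ s ∈ ((C₂ : Set (Fin N → F)) \ (C₁ : Set (Fin N → F))),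
        {c : Fin N → F | c ∈ C₁ ∧ hammingDist s c ≤ minDist C₂}.ncard
      = Nat.card C₁ * weightCount C₂ (minDist C₂) :=
  stmt_2_general C₁ C₂ hsub hΔ
end

section
/- For every real δ with 0 < δ < 1 and every prime power q ≥ 2 such that h := ⌊q^δ⌋ ≥ 1, setting n = q^h and d = q², there exist finite sets A, B of vectors in (Fin d → Bool) with |A| = |B| = n and a set E ⊆ A × B with |E| ≥ n^{2−δ}/2 such that: every pair (a, b) ∈ E has Hamming distance exactly 2(q − h); every pair (a, b) ∈ (A × B) \ E has Hamming distance strictly greater than 2(q − h); and any two distinct vectors both in A or both in B have Hamming distance strictly greater than 2(q − h). -/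
/-!
Identify the `q²` coordinates with `F × F` for a field `F` of order `q` and encode a function
`f : F → F` by the indicator of its graph, so that two codewords are at Hamming distance
`2 · #{x | f x ≠ g x}`. Take `A` to be the codewords of the polynomials of degree `< h`, `B` those
of the monic polynomials of degree `h`, and join `p ∈ A` to `r ∈ B` when `r - p` splits into `h`
distinct linear factors. A nonzero difference of degree `< h` has fewer than `h` roots, and the
monic difference `r - p` of degree `h` has at most `h` roots, with equality exactly on the edges.
An edge is determined by `p` and the `h`-set of roots of `r - p`, so there are
`q^h · C(q, h) ≥ q^h (q/h)^h ≥ n^(2-δ)` of them.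
-/

open Finset Polynomial

namespace Polynomial

variable {R : Type*}

section Ring

variable [Ring R]

lemma degree_sub_lt_of_degree_lt {p r : R[X]} {n : WithBot ℕ} (hp : p.degree < n)
    (hr : r.degree < n) : (p - r).degree < n :=
  (degree_sub_le p r).trans_lt (max_lt hp hr)

variable [Nontrivial R]

lemma degree_sub_lt_of_monic_of_natDegree_eq {p r : R[X]} {n : ℕ} (hp : p.Monic)
    (hr : r.Monic) (hpn : p.natDegree = n) (hrn : r.natDegree = n) : (p - r).degree < n := by
  have hdeg : p.degree = n := by rw [degree_eq_natDegree hp.ne_zero, hpn]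
  refine hdeg ▸ degree_sub_lt_left ?_ hp.ne_zero (by rw [hp.leadingCoeff, hr.leadingCoeff])
  rw [hdeg, degree_eq_natDegree hr.ne_zero, hrn]

lemma monic_sub_of_degree_lt {p r : R[X]} {n : ℕ} (hr : r.Monic) (hrn : r.natDegree = n)
    (hp : p.degree < n) : (r - p).Monic ∧ (r - p).natDegree = n := by
  have hpr : p.degree < r.degree := by rwa [degree_eq_natDegree hr.ne_zero, hrn]
  exact ⟨hr.sub_of_left hpr,
    hrn ▸ natDegree_eq_of_degree_eq (degree_sub_eq_left_of_degree_lt hpr)⟩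

lemma monic_add_of_degree_lt {p r : R[X]} {n : ℕ} (hr : r.Monic) (hrn : r.natDegree = n)
    (hp : p.degree < n) : (p + r).Monic ∧ (p + r).natDegree = n := by
  have hpr : p.degree < r.degree := by rwa [degree_eq_natDegree hr.ne_zero, hrn]
  exact ⟨hr.add_of_right hpr, hrn ▸ natDegree_add_eq_right_of_degree_lt hpr⟩

end Ring

section IsDomain

variable [CommRing R] [IsDomain R]

lemma eq_prod_X_sub_C_of_monic {P : R[X]} (hP : P.Monic) {S : Finset R}
    (hS : ∀ x ∈ S, P.IsRoot x) (hdeg : P.natDegree ≤ #S) : P = ∏ s ∈ S, (X - C s) := by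
  have hle : S.val ≤ P.roots :=
    (Multiset.le_iff_subset S.nodup).2 fun x hx => (mem_roots hP.ne_zero).2 (hS x hx)
  have hroots : S.val = P.roots :=
    Multiset.eq_of_le_of_card_le hle ((card_roots' P).trans hdeg)
  have hcard : Multiset.card P.roots = P.natDegree :=
    (card_roots' P).antisymm (hroots ▸ hdeg)
  rw [prod_eq_multiset_prod, hroots, prod_multiset_X_sub_C_of_monic_of_roots_card_eq hP hcard]

variable [Fintype R] [DecidableEq R]

lemma card_eval_eq_le_natDegree_sub {p r : R[X]} (hpr : p ≠ r) :
    #{x | p.eval x = r.eval x} ≤ (r - p).natDegree :=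
  card_le_degree_of_subset_roots fun x hx => by
    simp_all [mem_roots (sub_ne_zero.2 hpr.symm)]

lemma card_eval_eq_lt_of_degree_sub_lt {p r : R[X]} {n : ℕ} (hpr : p ≠ r)
    (hdeg : (r - p).degree < n) : #{x | p.eval x = r.eval x} < n :=
  (card_eval_eq_le_natDegree_sub hpr).trans_lt
    ((natDegree_lt_iff_degree_lt (sub_ne_zero.2 hpr.symm)).2 hdeg)

lemma filter_eval_eq_add_prod_X_sub_C (p : R[X]) (S : Finset R) :
    ({x | p.eval x = (p + ∏ s ∈ S, (X - C s)).eval x} : Finset R) = S := by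
  ext x
  simp [eval_prod, prod_eq_zero_iff, sub_eq_zero]

end IsDomain

end Polynomial

section FiniteField

variable (F : Type*) [Field F] [Fintype F]

lemma finite_setOf_degree_lt (n : ℕ) : {p : F[X] | p.degree < n}.Finite := by
  have : Finite (degreeLT F n) := .of_equiv _ (degreeLTEquiv F n).toEquiv.symm
  exact (degreeLT F n : Set F[X]).toFinite.subset fun p => mem_degreeLT.2

lemma finite_setOf_monic_natDegree (n : ℕ) : {p : F[X] | p.Monic ∧ p.natDegree = n}.Finite :=
  Set.finite_coe_iff.1 <|
    .of_equiv _ ((monicEquivDegreeLT n).trans (degreeLTEquiv F n).toEquiv).symm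

lemma ncard_setOf_degree_lt (n : ℕ) : {p : F[X] | p.degree < n}.ncard = Fintype.card F ^ n := by
  rw [← Nat.card_coe_set_eq]
  exact (Nat.card_congr <| (Equiv.subtypeEquivRight fun _ => mem_degreeLT.symm).trans
    (degreeLTEquiv F n).toEquiv).trans (by simp)

lemma ncard_setOf_monic_natDegree (n : ℕ) :
    {p : F[X] | p.Monic ∧ p.natDegree = n}.ncard = Fintype.card F ^ n := by
  rw [← Nat.card_coe_set_eq]
  exact (Nat.card_congr <| (monicEquivDegreeLT n).trans (degreeLTEquiv F n).toEquiv).trans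
    (by simp)

end FiniteField

section GraphIndicator

variable {α β : Type*} [DecidableEq β]

def graphIndicator (f : α → β) (z : α × β) : Bool := decide (z.2 = f z.1)

lemma graphIndicator_injective :
    Function.Injective (graphIndicator : (α → β) → α × β → Bool) := by
  intro f g hfg
  funext x
  simpa [graphIndicator] using congrFun hfg (x, f x)

lemma card_graphIndicator_ne_graphIndicator [Fintype β] (f g : α → β) (x : α) :
    #{y | graphIndicator f (x, y) ≠ graphIndicator g (x, y)} = if f x = g x then 0 else 2 := by
  split_ifs with hfg
  · simp [graphIndicator, hfg]
  · rw [← card_pair hfg]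
    congr 1
    ext y
    by_cases hyf : y = f x <;> by_cases hyg : y = g x <;> simp_all [graphIndicator, eq_comm]

lemma hammingDist_graphIndicator [Fintype α] [Fintype β] (f g : α → β) :
    hammingDist (graphIndicator f) (graphIndicator g) = 2 * #{x | f x ≠ g x} := by
  rw [hammingDist, card_filter, Fintype.sum_prod_type, card_filter, mul_sum]
  refine sum_congr rfl fun x _ => ?_
  rw [← card_filter, card_graphIndicator_ne_graphIndicator]
  split_ifs <;> simp_all

end GraphIndicator

lemma hammingDist_comp_equiv {ι κ β : Type*} [Fintype ι] [Fintype κ] [DecidableEq β]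
    (e : ι ≃ κ) (u v : κ → β) :
    hammingDist (fun i => u (e i)) (fun i => v (e i)) = hammingDist u v :=
  card_equiv e (by simp)

section PolyCode

variable {F ι : Type*} [Field F] [DecidableEq F] (e : ι ≃ F × F)

def polyCode (p : F[X]) : ι → Bool := fun i => graphIndicator (fun x => p.eval x) (e i)

variable {e}

lemma eval_eq_of_polyCode_eq {p r : F[X]} (h : polyCode e p = polyCode e r) (x : F) :
    p.eval x = r.eval x := by
  have : graphIndicator (fun x => p.eval x) = graphIndicator (fun x => r.eval x) :=
    funext fun z => by simpa [polyCode] using congrFun h (e.symm z)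
  exact congrFun (graphIndicator_injective this) x

variable [Fintype F]

lemma eq_of_polyCode_eq {p r : F[X]} (hdeg : (p - r).degree < Fintype.card F)
    (h : polyCode e p = polyCode e r) : p = r :=
  eq_of_degree_sub_lt_of_eval_finset_eq univ hdeg fun x _ => eval_eq_of_polyCode_eq h x

variable [Fintype ι]

lemma hammingDist_polyCode (p r : F[X]) :
    hammingDist (polyCode e p) (polyCode e r)
      = 2 * (Fintype.card F - #{x | p.eval x = r.eval x}) := by
  unfold polyCode
  rw [hammingDist_comp_equiv, hammingDist_graphIndicator, ← card_univ,
    ← card_filter_add_card_filter_not (s := univ) fun x => p.eval x = r.eval x]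
  simp

lemma two_mul_sub_lt_hammingDist_polyCode {p r : F[X]} {n : ℕ} (hn : n ≤ Fintype.card F)
    (hpr : p ≠ r) (hdeg : (r - p).degree < n) :
    2 * (Fintype.card F - n) < hammingDist (polyCode e p) (polyCode e r) := by
  have := card_eval_eq_lt_of_degree_sub_lt hpr hdeg
  rw [hammingDist_polyCode]
  omega

end PolyCode

namespace ReedSolomonGraph

variable {F ι : Type*} [Field F] [Fintype F] [DecidableEq F] [Fintype ι]
  (e : ι ≃ F × F) (h : ℕ)

noncomputable def left : Finset (ι → Bool) :=
  (finite_setOf_degree_lt F h).toFinset.image (polyCode e)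

noncomputable def right : Finset (ι → Bool) :=
  (finite_setOf_monic_natDegree F h).toFinset.image (polyCode e)

noncomputable def edges : Finset ((ι → Bool) × (ι → Bool)) :=
  ((finite_setOf_degree_lt F h).toFinset ×ˢ powersetCard h univ).image fun pS =>
    (polyCode e pS.1, polyCode e (pS.1 + ∏ s ∈ pS.2, (X - C s)))

variable {e h}

lemma card_left (hh : h < Fintype.card F) : #(left e h) = Fintype.card F ^ h := by
  rw [left, card_image_of_injOn, ← Set.ncard_eq_toFinset_card _ (finite_setOf_degree_lt F h),
    ncard_setOf_degree_lt]
  rw [Set.Finite.coe_toFinset]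
  intro p (hp : p.degree < h) r (hr : r.degree < h)
  exact eq_of_polyCode_eq <| (degree_sub_lt_of_degree_lt hp hr).trans (by exact_mod_cast hh)

lemma card_right (hh : h < Fintype.card F) : #(right e h) = Fintype.card F ^ h := by
  rw [right, card_image_of_injOn,
    ← Set.ncard_eq_toFinset_card _ (finite_setOf_monic_natDegree F h),
    ncard_setOf_monic_natDegree]
  rw [Set.Finite.coe_toFinset]
  rintro p ⟨hp, hpn⟩ r ⟨hr, hrn⟩
  exact eq_of_polyCode_eq <| (degree_sub_lt_of_monic_of_natDegree_eq hp hr hpn hrn).trans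
    (by exact_mod_cast hh)

lemma edges_subset : edges e h ⊆ left e h ×ˢ right e h := by
  intro ab hab
  obtain ⟨⟨p, S⟩, hpS, rfl⟩ := mem_image.1 hab
  simp only [mem_product, Set.Finite.mem_toFinset, Set.mem_ofPred_eq, mem_powersetCard,
    subset_univ, true_and] at hpS
  have hprod := monic_add_of_degree_lt (monic_prod_of_monic S _ fun s _ => monic_X_sub_C s)
    (natDegree_finsetProd_X_sub_C_eq_card S id ▸ hpS.2) hpS.1
  exact mem_product.2 ⟨mem_image_of_mem _ (by simpa using hpS.1),
    mem_image_of_mem _ (by simpa using hprod)⟩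

lemma card_edges (hh : h < Fintype.card F) :
    #(edges e h) = Fintype.card F ^ h * (Fintype.card F).choose h := by
  rw [edges, card_image_of_injOn, card_product,
    ← Set.ncard_eq_toFinset_card _ (finite_setOf_degree_lt F h), ncard_setOf_degree_lt,
    card_powersetCard, card_univ]
  rintro ⟨p, S⟩ hpS ⟨r, T⟩ hrT heq
  simp only [coe_product, Set.Finite.coe_toFinset, Set.mem_prod, Set.mem_ofPred_eq] at hpS hrT
  obtain ⟨hpr, hST⟩ := Prod.mk.inj heq
  obtain rfl : p = r :=
    eq_of_polyCode_eq ((degree_sub_lt_of_degree_lt hpS.1 hrT.1).trans (by exact_mod_cast hh)) hpr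
  rw [← filter_eval_eq_add_prod_X_sub_C p S, ← filter_eval_eq_add_prod_X_sub_C p T]
  simp only [eval_eq_of_polyCode_eq hST]

lemma hammingDist_of_mem_edges {ab : (ι → Bool) × (ι → Bool)} (hab : ab ∈ edges e h) :
    hammingDist ab.1 ab.2 = 2 * (Fintype.card F - h) := by
  obtain ⟨⟨p, S⟩, hpS, rfl⟩ := mem_image.1 hab
  rw [hammingDist_polyCode, filter_eval_eq_add_prod_X_sub_C,
    (mem_powersetCard.1 (mem_product.1 hpS).2).2]

lemma two_mul_sub_lt_hammingDist_of_not_mem_edges (hh : h ≤ Fintype.card F) {a b : ι → Bool}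
    (ha : a ∈ left e h) (hb : b ∈ right e h) (hab : (a, b) ∉ edges e h) :
    2 * (Fintype.card F - h) < hammingDist a b := by
  obtain ⟨p, hp, rfl⟩ := mem_image.1 ha
  obtain ⟨r, hr, rfl⟩ := mem_image.1 hb
  rw [Set.Finite.mem_toFinset] at hp hr
  obtain ⟨hmon, hdeg⟩ := monic_sub_of_degree_lt hr.1 hr.2 hp
  rw [hammingDist_polyCode]
  by_contra! hle
  set S : Finset F := {x | p.eval x = r.eval x}
  have hS : #S = h := le_antisymm
    (hdeg ▸ card_eval_eq_le_natDegree_sub (sub_ne_zero.1 hmon.ne_zero).symm) (by omega)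
  have hprod : r - p = ∏ s ∈ S, (X - C s) := eq_prod_X_sub_C_of_monic hmon
    (fun x hx => by simp [S] at hx; simp [hx]) (hdeg.trans hS.symm).le
  exact hab (mem_image.2 ⟨(p, S), mem_product.2 ⟨by simpa using hp, by simpa using hS⟩,
    by rw [← hprod, add_sub_cancel]⟩)

lemma two_mul_sub_lt_hammingDist_left (hh : h ≤ Fintype.card F) {a a' : ι → Bool}
    (ha : a ∈ left e h) (ha' : a' ∈ left e h) (hne : a ≠ a') :
    2 * (Fintype.card F - h) < hammingDist a a' := by
  obtain ⟨p, hp, rfl⟩ := mem_image.1 ha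
  obtain ⟨r, hr, rfl⟩ := mem_image.1 ha'
  rw [Set.Finite.mem_toFinset] at hp hr
  exact two_mul_sub_lt_hammingDist_polyCode hh (ne_of_apply_ne _ hne)
    (degree_sub_lt_of_degree_lt hr hp)

lemma two_mul_sub_lt_hammingDist_right (hh : h ≤ Fintype.card F) {b b' : ι → Bool}
    (hb : b ∈ right e h) (hb' : b' ∈ right e h) (hne : b ≠ b') :
    2 * (Fintype.card F - h) < hammingDist b b' := by
  obtain ⟨p, hp, rfl⟩ := mem_image.1 hb
  obtain ⟨r, hr, rfl⟩ := mem_image.1 hb'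
  rw [Set.Finite.mem_toFinset] at hp hr
  exact two_mul_sub_lt_hammingDist_polyCode hh (ne_of_apply_ne _ hne)
    (degree_sub_lt_of_monic_of_natDegree_eq hr.1 hp.1 hr.2 hp.2)

end ReedSolomonGraph

lemma Nat.pow_le_pow_mul_choose {n k : ℕ} (hk : k ≤ n) : n ^ k ≤ k ^ k * n.choose k := by
  have key : n ^ k * k.descFactorial k ≤ k ^ k * n.descFactorial k := by
    simp only [descFactorial_eq_prod_range]
    calc n ^ k * ∏ i ∈ range k, (k - i) = ∏ i ∈ range k, n * (k - i) := by
          rw [prod_mul_distrib, prod_const, card_range]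
      _ ≤ ∏ i ∈ range k, k * (n - i) := prod_le_prod' fun i _ => by
          rw [Nat.mul_sub, Nat.mul_sub, Nat.mul_comm n k]
          exact Nat.sub_le_sub_left (Nat.mul_le_mul_right i hk) _
      _ = k ^ k * ∏ i ∈ range k, (n - i) := by rw [prod_mul_distrib, prod_const, card_range]
  rw [descFactorial_self, descFactorial_eq_factorial_mul_choose, Nat.mul_left_comm,
    Nat.mul_comm (n ^ k)] at key
  exact Nat.le_of_mul_le_mul_left key k.factorial_pos

lemma rpow_two_sub_le_pow_mul_choose {q h : ℕ} {δ : ℝ} (hh : 1 ≤ h) (hhq : h ≤ q)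
    (hhδ : (h : ℝ) ≤ (q : ℝ) ^ δ) :
    ((q : ℝ) ^ h) ^ (2 - δ) ≤ (q : ℝ) ^ h * q.choose h := by
  have hq : (0 : ℝ) < q := by exact_mod_cast hh.trans hhq
  have hh0 : (0 : ℝ) < h := by exact_mod_cast hh
  have hbase : (q : ℝ) ^ (1 - δ) ≤ q / h := by
    rw [Real.rpow_sub hq, Real.rpow_one]
    exact div_le_div_of_nonneg_left hq.le hh0 hhδ
  have hchoose : ((q : ℝ) / h) ^ h ≤ q.choose h := by
    rw [div_pow, div_le_iff₀ (by positivity), mul_comm]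
    exact_mod_cast Nat.pow_le_pow_mul_choose hhq
  calc ((q : ℝ) ^ h) ^ (2 - δ) = (q : ℝ) ^ h * ((q : ℝ) ^ (1 - δ)) ^ h := by
        rw [← Real.rpow_mul_natCast hq.le, ← Real.rpow_natCast,
          ← Real.rpow_mul hq.le, ← Real.rpow_add hq]
        ring_nf
    _ ≤ (q : ℝ) ^ h * q.choose h := by
        gcongr
        exact (pow_le_pow_left₀ (by positivity) hbase h).trans hchoose

open ReedSolomonGraph in
theorem stmt_8_general (δ : ℝ) (hδ1 : δ < 1)
    (q : ℕ) (hq : IsPrimePow q) (hq2 : 2 ≤ q)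
    (h : ℕ) (hdef : h = ⌊(q : ℝ) ^ δ⌋₊) (h1 : 1 ≤ h) :
    ∃ (A B : Finset (Fin (q ^ 2) → Bool))
      (E : Finset ((Fin (q ^ 2) → Bool) × (Fin (q ^ 2) → Bool))),
      A.card = q ^ h ∧ B.card = q ^ h ∧
      E ⊆ A ×ˢ B ∧
      ((q ^ h : ℝ) ^ (2 - δ)) / 2 ≤ (E.card : ℝ) ∧
      (∀ ab ∈ E, hammingDist ab.1 ab.2 = 2 * (q - h)) ∧
      (∀ a ∈ A, ∀ b ∈ B, (a, b) ∉ E → 2 * (q - h) < hammingDist a b) ∧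
      (∀ a ∈ A, ∀ a' ∈ A, a ≠ a' → 2 * (q - h) < hammingDist a a') ∧
      (∀ b ∈ B, ∀ b' ∈ B, b ≠ b' → 2 * (q - h) < hammingDist b b') := by
  classical
  have hhδ : (h : ℝ) ≤ (q : ℝ) ^ δ := by
    rw [hdef]
    exact Nat.floor_le (by positivity)
  have hhq : h < q := by
    have := Real.rpow_lt_rpow_of_exponent_lt (by exact_mod_cast hq2 : (1 : ℝ) < q) hδ1
    rw [Real.rpow_one] at this
    exact_mod_cast hhδ.trans_lt this
  obtain ⟨p, k, hp, hk, hpk⟩ := hq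
  have : Fact p.Prime := ⟨hp.nat_prime⟩
  let F := GaloisField p k
  let : Fintype F := .ofFinite F
  have hF : Fintype.card F = q := by
    rw [← Nat.card_eq_fintype_card, GaloisField.card p k hk.ne', hpk]
  subst hF
  let e : Fin (Fintype.card F ^ 2) ≃ F × F := Fintype.equivOfCardEq (by simp [sq])
  refine ⟨left e h, right e h, edges e h, card_left hhq, card_right hhq, edges_subset, ?_,
    fun _ => hammingDist_of_mem_edges,
    fun _ ha _ hb => two_mul_sub_lt_hammingDist_of_not_mem_edges hhq.le ha hb,
    fun _ ha _ ha' => two_mul_sub_lt_hammingDist_left hhq.le ha ha',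
    fun _ hb _ hb' => two_mul_sub_lt_hammingDist_right hhq.le hb hb'⟩
  rw [card_edges hhq]
  push_cast
  exact (half_le_self (by positivity)).trans (rpow_two_sub_le_pow_mul_choose h1 hhq.le hhδ)

/-- the Reed–Solomon-based instantiation of a dense bipartite graph with
low contact dimension: for `0 < δ < 1` and a prime power `q ≥ 2` with `h = ⌊q^δ⌋ ≥ 1`,
taking `n = q^h` and `d = q²`, there are sets `A, B ⊆ {0,1}^d` of size `n` and
`E ⊆ A × B` with `|E| ≥ n^{2-δ}/2` such that edges are at Hamming distance exactly
`2(q - h)` and all other distinct pairs are at distance strictly greater. -/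
theorem stmt_8 (δ : ℝ) (hδ0 : 0 < δ) (hδ1 : δ < 1)
    (q : ℕ) (hq : IsPrimePow q) (hq2 : 2 ≤ q)
    (h : ℕ) (hdef : h = ⌊(q : ℝ) ^ δ⌋₊) (h1 : 1 ≤ h) :
    ∃ (A B : Finset (Fin (q ^ 2) → Bool))
      (E : Finset ((Fin (q ^ 2) → Bool) × (Fin (q ^ 2) → Bool))),
      A.card = q ^ h ∧ B.card = q ^ h ∧
      E ⊆ A ×ˢ B ∧
      ((q ^ h : ℝ) ^ (2 - δ)) / 2 ≤ (E.card : ℝ) ∧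
      (∀ ab ∈ E, hammingDist ab.1 ab.2 = 2 * (q - h)) ∧
      (∀ a ∈ A, ∀ b ∈ B, (a, b) ∉ E → 2 * (q - h) < hammingDist a b) ∧
      (∀ a ∈ A, ∀ a' ∈ A, a ≠ a' → 2 * (q - h) < hammingDist a a') ∧
      (∀ b ∈ B, ∀ b' ∈ B, b ≠ b' → 2 * (q - h) < hammingDist b b') :=
  stmt_8_general δ hδ1 q hq hq2 h hdef h1
end
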